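/- Let Φ = C_1 ∧ … ∧ C_m be a CNF over Boolean variables x_1, …, x_n in which no clause contains both a variable and its negation. Let G_Φ be the simple graph with vertex set {x_i, x̄_i, y_i : i = 1,…,n} ∪ {C_j : j = 1,…,m} ∪ {z}, whose edges are: for each i, the triangle on {x_i, x̄_i, y_i}; all pairs within {C_1, …, C_m, z} (a clique); and an edge between C_j and each literal vertex (x_i or x̄_i) occurring in clause C_j. Then Φ is not satisfiable if and only if G_Φ is a unique key graph. -/

import Mathlib

open scoped Classical

variable {V : Type*} [Fintype V] [DecidableEq V]

/-- A Sperner hypergraph: no hyperedge contains another one. -/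
def SpernerFam (𝓑 : Set (Finset V)) : Prop :=
  ∀ B₁ ∈ 𝓑, ∀ B₂ ∈ 𝓑, B₁ ⊆ B₂ → B₁ = B₂

/-- `T` is a transversal of `𝓑` if it meets every hyperedge. -/
def IsTransversal (𝓑 : Set (Finset V)) (T : Finset V) : Prop :=
  ∀ B ∈ 𝓑, (T ∩ B).Nonempty

/-- `𝓑^d`: the family of inclusion-minimal transversals of `𝓑`. -/
def dualHyp (𝓑 : Set (Finset V)) : Set (Finset V) :=
  {T | IsTransversal 𝓑 T ∧ ∀ T', IsTransversal 𝓑 T' → T' ⊆ T → T' = T}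

/-- A Boolean function `h` on `V` is pure Horn if its set of true assignments contains the
all-true assignment and is closed under componentwise AND. -/
def PureHorn (h : (V → Bool) → Bool) : Prop :=
  h (fun _ => true) = true ∧
  ∀ x y : V → Bool, h x = true → h y = true → h (fun v => x v && y v) = true

/-- The clause `A → v` is an implicate of `h`: every true assignment of `h` that is true on
every element of `A` is also true at `v`. -/
def Implicate (h : (V → Bool) → Bool) (A : Finset V) (v : V) : Prop :=
  ∀ x : V → Bool, h x = true → (∀ a ∈ A, x a = true) → x v = true

/-- `K` is a key of `h` if `K → v` is an implicate of `h` for every `v ∈ V \ K`. -/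
def IsKey (h : (V → Bool) → Bool) (K : Finset V) : Prop :=
  ∀ v ∉ K, Implicate h K v

/-- `𝒦(h)`: the family of inclusion-minimal keys of `h`. -/
def minKeys (h : (V → Bool) → Bool) : Set (Finset V) :=
  {K | IsKey h K ∧ ∀ K', IsKey h K' → K' ⊆ K → K' = K}

/-- `Φ_𝓑`: the pure Horn function whose true assignments are exactly those `x` such that for
every `B ∈ 𝓑` on which `x` is identically true, `x` is identically true on all of `V`. -/
noncomputable def PhiB (𝓑 : Set (Finset V)) : (V → Bool) → Bool :=
  fun x => decide (∀ B ∈ 𝓑, (∀ u ∈ B, x u = true) → ∀ v : V, x v = true)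

/-- `𝓑` is a unique key hypergraph: `Φ_𝓑` is the unique pure Horn function `h`
with `𝒦(h) = 𝓑`. -/
def UniqueKeyHypergraph (𝓑 : Set (Finset V)) : Prop :=
  minKeys (PhiB 𝓑) = 𝓑 ∧
  ∀ h : (V → Bool) → Bool, PureHorn h → minKeys h = 𝓑 → h = PhiB 𝓑

/-- The edge set of a simple graph viewed as a hypergraph of two-element sets. -/
def edgeFam (G : SimpleGraph V) : Set (Finset V) :=
  {e | ∃ u v : V, G.Adj u v ∧ e = {u, v}}

/-- The vertex set of the graph `G_Φ` associated to a CNF with `n` variables and `m`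
clauses: `Sum.inl (i, 0)` is the positive literal vertex `xᵢ`, `Sum.inl (i, 1)` is the
negative literal vertex `x̄ᵢ`, `Sum.inl (i, 2)` is the auxiliary vertex `yᵢ`,
`Sum.inr (some j)` is the clause vertex `Cⱼ`, and `Sum.inr none` is the vertex `z`. -/
abbrev Vtx (n m : ℕ) : Type := (Fin n × Fin 3) ⊕ Option (Fin m)

/-- The graph `G_Φ` associated to the CNF whose `j`-th clause is the set of literals
`Cl j` (a literal `(i, true)` stands for `xᵢ`, and `(i, false)` for `x̄ᵢ`): for each `i`
the triangle on `{xᵢ, x̄ᵢ, yᵢ}`, a clique on the clause vertices together with `z`, and an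
edge between each clause vertex and each literal vertex occurring in that clause. -/
def GPhi (n m : ℕ) (Cl : Fin m → Finset (Fin n × Bool)) : SimpleGraph (Vtx n m) :=
  SimpleGraph.fromRel (fun a b =>
    match a, b with
    | Sum.inl (i, _), Sum.inl (i', _) => i = i'
    | Sum.inr _, Sum.inr _ => True
    | Sum.inl (i, k), Sum.inr (some j) =>
        (k = 0 ∧ (i, true) ∈ Cl j) ∨ (k = 1 ∧ (i, false) ∈ Cl j)
    | _, _ => False)

/-
For a graph `G` with an edge, `Φ_G` has the edges as minimal keys, and every pure Horn `h` with
these minimal keys lies below `Φ_G`. If `h < Φ_G`, take a true point `x` of `Φ_G` with `h x`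
false: its support `S` is independent, and some `v ∉ S` is implied by `S` under `h`. Since every
edge is a key of `h`, the vertex `v` has no neighbour in `S` and every neighbour of `v` has one,
i.e. `N(v) ⊆ N(S)`. Conversely, for such a pair `(S, v)` adding the clause `S → v` to `Φ_G`
changes the function but not its minimal keys. So `G` is a unique key graph iff it has an edge
and no such pair.

In `G_Φ` such a pair can only have `v = z`, and then `S` contains a literal vertex in every
clause and never both literals of a variable (no clause contains both), so it defines a
satisfying assignment; conversely the true literals of a satisfying assignment form such an `S`
with `v = z`.
-/

section Keys

variable {h h' : (V → Bool) → Bool} {𝓑 : Set (Finset V)} {A K K' : Finset V} {v : V}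

omit [Fintype V] [DecidableEq V] in
lemma Implicate.mono (hv : Implicate h A v) (hAK : A ⊆ K) : Implicate h K v :=
  fun x hx hK => hv x hx fun a ha => hK a (hAK ha)

omit [Fintype V] [DecidableEq V] in
lemma IsKey.mono (hK : IsKey h K) (hKK' : K ⊆ K') : IsKey h K' :=
  fun v hv => (hK v fun hvK => hv (hKK' hvK)).mono hKK'

omit [Fintype V] [DecidableEq V] in
lemma IsKey.of_le (hK : IsKey h' K) (hle : ∀ x, h x = true → h' x = true) : IsKey h K :=
  fun v hv x hx => hK v hv x (hle x hx)

omit [Fintype V] in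
lemma IsKey.of_implicate (hK : IsKey h K) (hA : ∀ b ∈ K, Implicate h A b) : IsKey h A := by
  intro v _ x hx hxA
  by_cases hvK : v ∈ K
  · exact hA v hvK x hx hxA
  · exact hK v hvK x hx fun b hb => hA b hb x hx hxA

omit [DecidableEq V] in
lemma isKey_univ : IsKey h Finset.univ :=
  fun v hv => absurd (Finset.mem_univ v) hv

omit [Fintype V] [DecidableEq V] in
lemma exists_mem_minKeys_subset (hK : IsKey h K) : ∃ K' ∈ minKeys h, K' ⊆ K := by
  obtain ⟨K', hK'K, hmin⟩ := exists_minimal_le_of_wellFoundedLT _ K hK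
  exact ⟨K', ⟨hmin.1, fun _ hK'' hle => hmin.eq_of_le hK'' hle⟩, hK'K⟩

omit [DecidableEq V] in
lemma minKeys_nonempty (h : (V → Bool) → Bool) : (minKeys h).Nonempty :=
  let ⟨K, hK, _⟩ := exists_mem_minKeys_subset (h := h) isKey_univ
  ⟨K, hK⟩

omit [Fintype V] [DecidableEq V] in
lemma isKey_iff_of_minKeys_eq (hm : minKeys h = 𝓑) : IsKey h K ↔ ∃ B ∈ 𝓑, B ⊆ K := by
  subst hm
  refine ⟨exists_mem_minKeys_subset, ?_⟩
  rintro ⟨B, hB, hBK⟩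
  exact hB.1.mono hBK

omit [Fintype V] [DecidableEq V] in
lemma minKeys_eq_of_isKey_iff (h𝓑 : SpernerFam 𝓑) (hkeys : ∀ K, IsKey h K ↔ ∃ B ∈ 𝓑, B ⊆ K) :
    minKeys h = 𝓑 := by
  ext K
  constructor
  · rintro ⟨hK, hmin⟩
    obtain ⟨B, hB, hBK⟩ := (hkeys K).1 hK
    rwa [← hmin B ((hkeys B).2 ⟨B, hB, subset_rfl⟩) hBK]
  · intro hK
    refine ⟨(hkeys K).2 ⟨K, hK, subset_rfl⟩, fun K' hK' hK'K => ?_⟩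
    obtain ⟨B, hB, hBK'⟩ := (hkeys K').1 hK'
    exact hK'K.antisymm (h𝓑 B hB K hK (hBK'.trans hK'K) ▸ hBK')

end Keys

section PhiB

variable {h : (V → Bool) → Bool} {𝓑 : Set (Finset V)} {A K : Finset V}

def charFun (A : Finset V) : V → Bool := fun w => decide (w ∈ A)

omit [Fintype V] in
@[simp]
lemma charFun_eq_true {w : V} : charFun A w = true ↔ w ∈ A := decide_eq_true_iff

lemma IsKey.eq_univ_of_subset (hK : IsKey h K) (hKA : K ⊆ A) (hA : h (charFun A) = true) :
    A = Finset.univ := by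
  refine Finset.eq_univ_iff_forall.2 fun v => ?_
  by_cases hvK : v ∈ K
  · exact hKA hvK
  · exact (charFun_eq_true).1 (hK v hvK _ hA fun a ha => (charFun_eq_true).2 (hKA ha))

lemma phiB_eq_true_iff {x : V → Bool} :
    PhiB 𝓑 x = true ↔ ∀ B ∈ 𝓑, (∀ u ∈ B, x u = true) → ∀ v, x v = true :=
  decide_eq_true_iff

lemma phiB_charFun (hA : ∀ B ∈ 𝓑, ¬ B ⊆ A) : PhiB 𝓑 (charFun A) = true :=
  phiB_eq_true_iff.2 fun B hB hBA => absurd (fun u hu => (charFun_eq_true).1 (hBA u hu)) (hA B hB)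

lemma pureHorn_phiB : PureHorn (PhiB 𝓑) := by
  refine ⟨phiB_eq_true_iff.2 fun _ _ _ _ => rfl, fun x y hx hy => phiB_eq_true_iff.2 ?_⟩
  intro B hB hxyB v
  simp only [Bool.and_eq_true] at hxyB ⊢
  exact ⟨phiB_eq_true_iff.1 hx B hB (fun u hu => (hxyB u hu).1) v,
    phiB_eq_true_iff.1 hy B hB (fun u hu => (hxyB u hu).2) v⟩

lemma isKey_phiB_iff (h𝓑 : 𝓑.Nonempty) : IsKey (PhiB 𝓑) K ↔ ∃ B ∈ 𝓑, B ⊆ K := by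
  refine ⟨fun hK => ?_, fun ⟨B, hB, hBK⟩ v _ x hx hxK =>
    phiB_eq_true_iff.1 hx B hB (fun u hu => hxK u (hBK hu)) v⟩
  by_contra! hno
  obtain ⟨B, hB⟩ := h𝓑
  have hK := hK.eq_univ_of_subset subset_rfl (phiB_charFun hno)
  exact hno B hB (hK ▸ Finset.subset_univ B)

lemma minKeys_phiB (h𝓑 : SpernerFam 𝓑) (hne : 𝓑.Nonempty) : minKeys (PhiB 𝓑) = 𝓑 :=
  minKeys_eq_of_isKey_iff h𝓑 fun _ => isKey_phiB_iff hne

lemma phiB_eq_true_of_minKeys_eq (hm : minKeys h = 𝓑) {x : V → Bool} (hx : h x = true) :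
    PhiB 𝓑 x = true := by
  refine phiB_eq_true_iff.2 fun B hB hxB v => ?_
  by_cases hv : v ∈ B
  · exact hxB v hv
  · exact (isKey_iff_of_minKeys_eq hm).2 ⟨B, hB, subset_rfl⟩ v hv x hx hxB

end PhiB

section PureHorn

variable {h : (V → Bool) → Bool}

lemma PureHorn.apply_forall_mem (hh : PureHorn h) (F : Finset (V → Bool))
    (hF : ∀ x ∈ F, h x = true) : h (fun v => decide (∀ x ∈ F, x v = true)) = true := by
  classical
  induction F using Finset.induction_on with
  | empty => simpa using hh.1
  | insert y F _ ih =>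
    have hyF := hh.2 y _ (hF y (Finset.mem_insert_self y F))
      (ih fun x hx => hF x (Finset.mem_insert_of_mem hx))
    convert hyF using 2 with v
    simp

lemma PureHorn.apply_eq_true_iff (hh : PureHorn h) {x : V → Bool} :
    h x = true ↔ ∀ v, Implicate h (Finset.univ.filter (x · = true)) v → x v = true := by
  refine ⟨fun hx v hv => hv x hx fun a ha => (Finset.mem_filter.1 ha).2, fun hcl => ?_⟩
  have hinf := hh.apply_forall_mem
    (Finset.univ.filter fun y => h y = true ∧ ∀ a ∈ Finset.univ.filter (x · = true), y a = true)
    fun y hy => (Finset.mem_filter.1 hy).2.1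
  convert hinf using 2
  funext v
  rw [Bool.eq_iff_iff, decide_eq_true_iff]
  simp only [Finset.mem_filter, Finset.mem_univ, true_and]
  exact ⟨fun hxv y hy => hy.2 v hxv,
    fun hv => hcl v fun y hy hyS => hv y ⟨hy, fun a ha => hyS a (by simpa using ha)⟩⟩

end PureHorn

section Graph

variable {G : SimpleGraph V} {h : (V → Bool) → Bool} {A K S : Finset V} {a b u v : V}

omit [Fintype V] in
lemma pair_mem_edgeFam (hab : G.Adj a b) : ({a, b} : Finset V) ∈ edgeFam G := ⟨a, b, hab, rfl⟩

omit [Fintype V] in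
lemma spernerFam_edgeFam (G : SimpleGraph V) : SpernerFam (edgeFam G) := by
  rintro _ ⟨a, b, hab, rfl⟩ _ ⟨c, d, hcd, rfl⟩ hsub
  exact Finset.eq_of_subset_of_card_le hsub
    (by rw [Finset.card_pair hab.ne, Finset.card_pair hcd.ne])

omit [Fintype V] in
lemma exists_edgeFam_subset_iff :
    (∃ e ∈ edgeFam G, e ⊆ A) ↔ ∃ a ∈ A, ∃ b ∈ A, G.Adj a b := by
  constructor
  · rintro ⟨_, ⟨a, b, hab, rfl⟩, hsub⟩
    exact ⟨a, hsub (by simp), b, hsub (by simp), hab⟩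
  · rintro ⟨a, ha, b, hb, hab⟩
    exact ⟨_, pair_mem_edgeFam hab, Finset.insert_subset ha (Finset.singleton_subset_iff.2 hb)⟩

omit [Fintype V] in
lemma isKey_iff_of_minKeys_eq_edgeFam (hm : minKeys h = edgeFam G) :
    IsKey h K ↔ ∃ a ∈ K, ∃ b ∈ K, G.Adj a b :=
  (isKey_iff_of_minKeys_eq hm).trans exists_edgeFam_subset_iff

omit [Fintype V] in
lemma forall_insert_not_adj (hA : ∀ a ∈ A, ∀ b ∈ A, ¬ G.Adj a b) (hu : ∀ a ∈ A, ¬ G.Adj a u) :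
    ∀ a ∈ insert u A, ∀ b ∈ insert u A, ¬ G.Adj a b := by
  simp only [Finset.mem_insert]
  rintro a (rfl | ha) b (rfl | hb) hab
  · exact G.irrefl hab
  · exact hu b hb hab.symm
  · exact hu a ha hab
  · exact hA a ha b hb hab

lemma phiB_edgeFam_charFun (hA : ∀ a ∈ A, ∀ b ∈ A, ¬ G.Adj a b) :
    PhiB (edgeFam G) (charFun A) = true :=
  phiB_charFun fun _ he hsub =>
    let ⟨a, ha, b, hb, hab⟩ := exists_edgeFam_subset_iff.1 ⟨_, he, hsub⟩
    hA a ha b hb hab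

/-- The obstruction to `G` being a unique key graph: adjoining the implicate `S → v` to `Φ_G`
keeps its minimal keys. -/
structure IsBadPair (G : SimpleGraph V) (S : Finset V) (v : V) : Prop where
  notMem : v ∉ S
  indep : ∀ a ∈ S, ∀ b ∈ S, ¬ G.Adj a b
  not_adj : ∀ s ∈ S, ¬ G.Adj s v
  covers : ∀ u, G.Adj v u → ∃ s ∈ S, G.Adj s u

omit [Fintype V] [DecidableEq V] in
lemma IsBadPair.exists_cover (hb : IsBadPair G S v) (hvu : G.Adj v u) :
    ∃ s ∈ S, G.Adj s u ∧ s ≠ v ∧ ¬ G.Adj s v := by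
  obtain ⟨s, hs, hsu⟩ := hb.covers u hvu
  exact ⟨s, hs, hsu, fun hsv => hb.notMem (hsv ▸ hs), hb.not_adj s hs⟩

def withImplicate (f : (V → Bool) → Bool) (S : Finset V) (v : V) : (V → Bool) → Bool :=
  fun x => f x && decide ((∀ u ∈ S, x u = true) → x v = true)

lemma pureHorn_withImplicate {f : (V → Bool) → Bool} (hf : PureHorn f) :
    PureHorn (withImplicate f S v) := by
  refine ⟨by simp [withImplicate, hf.1], fun x y hx hy => ?_⟩
  simp only [withImplicate, Bool.and_eq_true, decide_eq_true_eq] at hx hy ⊢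
  refine ⟨hf.2 x y hx.1 hy.1, fun hxy => ?_⟩
  exact ⟨hx.2 fun u hu => (hxy u hu).1, hy.2 fun u hu => (hxy u hu).2⟩

lemma IsBadPair.isKey_withImplicate_iff (hb : IsBadPair G S v) (hG : ∃ a b, G.Adj a b) :
    IsKey (withImplicate (PhiB (edgeFam G)) S v) K ↔ ∃ a ∈ K, ∃ b ∈ K, G.Adj a b := by
  obtain ⟨a₀, b₀, hab₀⟩ := hG
  constructor
  · intro hK
    by_contra! hK_indep
    -- an independent true point above `K` contradicts `K` being a key
    obtain ⟨A, hKA, hA_indep, hA⟩ : ∃ A, K ⊆ A ∧ (∀ a ∈ A, ∀ b ∈ A, ¬ G.Adj a b) ∧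
        withImplicate (PhiB (edgeFam G)) S v (charFun A) = true := by
      by_cases hSK : S ⊆ K
      · have hA_indep := forall_insert_not_adj hK_indep fun a ha hav =>
          let ⟨s, hs, hsa⟩ := hb.covers a hav.symm
          hK_indep s (hSK hs) a ha hsa
        refine ⟨insert v K, Finset.subset_insert v K, hA_indep, ?_⟩
        simp [withImplicate, phiB_edgeFam_charFun hA_indep]
      · refine ⟨K, subset_rfl, hK_indep, ?_⟩
        simp only [withImplicate, phiB_edgeFam_charFun hK_indep, Bool.true_and,
          decide_eq_true_eq, charFun_eq_true]
        exact fun hS => absurd (fun u hu => hS u hu) hSK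
    have hA_univ := hK.eq_univ_of_subset hKA hA
    exact hA_indep a₀ (hA_univ ▸ Finset.mem_univ a₀) b₀ (hA_univ ▸ Finset.mem_univ b₀) hab₀
  · intro hK
    refine ((isKey_phiB_iff ⟨_, pair_mem_edgeFam hab₀⟩).2 (exists_edgeFam_subset_iff.2 hK)).of_le ?_
    intro x hx
    simp only [withImplicate, Bool.and_eq_true] at hx
    exact hx.1

lemma IsBadPair.not_uniqueKeyHypergraph (hb : IsBadPair G S v) :
    ¬ UniqueKeyHypergraph (edgeFam G) := by
  rintro ⟨hm, huniq⟩
  obtain ⟨_, ⟨a, b, hab, rfl⟩⟩ := hm ▸ minKeys_nonempty (PhiB (edgeFam G))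
  have heq := huniq _ (pureHorn_withImplicate pureHorn_phiB) <| minKeys_eq_of_isKey_iff
    (spernerFam_edgeFam G) fun K =>
      (hb.isKey_withImplicate_iff ⟨a, b, hab⟩).trans exists_edgeFam_subset_iff.symm
  have := congrFun heq (charFun S)
  simp [withImplicate, phiB_edgeFam_charFun hb.indep, hb.notMem] at this

lemma eq_phiB_of_forall_not_isBadPair (hnb : ∀ S v, ¬ IsBadPair G S v) (hh : PureHorn h)
    (hm : minKeys h = edgeFam G) : h = PhiB (edgeFam G) := by
  have not_isKey : ∀ A, (∀ a ∈ A, ∀ b ∈ A, ¬ G.Adj a b) → ¬ IsKey h A := fun A hA hK =>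
    let ⟨a, ha, b, hb, hab⟩ := (isKey_iff_of_minKeys_eq_edgeFam hm).1 hK
    hA a ha b hb hab
  have isKey_pair : ∀ {a b}, G.Adj a b → IsKey h {a, b} := fun hab =>
    (isKey_iff_of_minKeys_eq_edgeFam hm).2 ⟨_, by simp, _, by simp, hab⟩
  funext x
  refine Bool.eq_iff_iff.2 ⟨phiB_eq_true_of_minKeys_eq hm, fun hx => ?_⟩
  refine hh.apply_eq_true_iff.2 fun v hv => ?_
  by_contra hxv
  set S := Finset.univ.filter (x · = true)
  have hS : ∀ {s}, s ∈ S ↔ x s = true := by simp [S]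
  have hS_indep : ∀ a ∈ S, ∀ b ∈ S, ¬ G.Adj a b := fun a ha b hb hab =>
    hxv <| phiB_eq_true_iff.1 hx _ (pair_mem_edgeFam hab) (by simp [hS.1 ha, hS.1 hb]) v
  have implicate_of_mem : ∀ {A : Finset V} {a}, a ∈ A → Implicate h A a :=
    fun ha _ _ hA => hA _ ha
  refine hnb S v ⟨fun hvS => hxv (hS.1 hvS), hS_indep, fun s hs hsv => ?_, fun u hvu => ?_⟩
  · refine not_isKey S hS_indep ((isKey_pair hsv).of_implicate ?_)
    simp only [Finset.mem_insert, Finset.mem_singleton]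
    rintro _ (rfl | rfl)
    exacts [implicate_of_mem hs, hv]
  · by_contra! hu
    refine not_isKey (insert u S) (forall_insert_not_adj hS_indep hu)
      ((isKey_pair hvu.symm).of_implicate ?_)
    simp only [Finset.mem_insert, Finset.mem_singleton]
    rintro _ (rfl | rfl)
    exacts [implicate_of_mem (Finset.mem_insert_self _ S), hv.mono (Finset.subset_insert _ S)]

theorem uniqueKeyHypergraph_edgeFam_iff :
    UniqueKeyHypergraph (edgeFam G) ↔ (∃ a b, G.Adj a b) ∧ ∀ S v, ¬ IsBadPair G S v := by
  refine ⟨fun huk => ⟨?_, fun S v hb => hb.not_uniqueKeyHypergraph huk⟩, fun ⟨hG, hnb⟩ => ?_⟩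
  · obtain ⟨_, ⟨a, b, hab, rfl⟩⟩ := huk.1 ▸ minKeys_nonempty (PhiB (edgeFam G))
    exact ⟨a, b, hab⟩
  · obtain ⟨a, b, hab⟩ := hG
    exact ⟨minKeys_phiB (spernerFam_edgeFam G) ⟨_, pair_mem_edgeFam hab⟩,
      fun h hh hm => eq_phiB_of_forall_not_isBadPair hnb hh hm⟩

end Graph

section GPhi

variable {n m : ℕ} {Cl : Fin m → Finset (Fin n × Bool)} {S : Finset (Vtx n m)}
  {i i' : Fin n} {k k' : Fin 3} {j : Fin m} {w w' : Option (Fin m)}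

@[simp]
lemma gPhi_adj_inl_inl :
    (GPhi n m Cl).Adj (.inl (i, k)) (.inl (i', k')) ↔ i = i' ∧ k ≠ k' := by
  simp only [GPhi, SimpleGraph.fromRel_adj, ne_eq, Sum.inl.injEq, Prod.mk.injEq, not_and]
  grind

@[simp]
lemma gPhi_adj_inl_some : (GPhi n m Cl).Adj (.inl (i, k)) (.inr (some j)) ↔
    (k = 0 ∧ (i, true) ∈ Cl j) ∨ (k = 1 ∧ (i, false) ∈ Cl j) := by
  simp [GPhi]

@[simp]
lemma gPhi_adj_some_inl : (GPhi n m Cl).Adj (.inr (some j)) (.inl (i, k)) ↔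
    (k = 0 ∧ (i, true) ∈ Cl j) ∨ (k = 1 ∧ (i, false) ∈ Cl j) := by
  simp [GPhi]

@[simp]
lemma gPhi_not_adj_inl_none : ¬ (GPhi n m Cl).Adj (.inl (i, k)) (.inr none) := by
  simp [GPhi]

@[simp]
lemma gPhi_not_adj_none_inl : ¬ (GPhi n m Cl).Adj (.inr none) (.inl (i, k)) := by
  simp [GPhi]

@[simp]
lemma gPhi_adj_inr_inr : (GPhi n m Cl).Adj (.inr w) (.inr w') ↔ w ≠ w' := by
  simp [GPhi]

lemma isBadPair_gPhi_of_sat {σ : Fin n → Bool} (hσ : ∀ j, ∃ l ∈ Cl j, σ l.1 = l.2) :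
    IsBadPair (GPhi n m Cl)
      (Finset.univ.image fun i => .inl (i, if σ i then 0 else 1)) (.inr none) := by
  refine ⟨by simp, ?_, by simp, ?_⟩
  · simp only [Finset.mem_image, Finset.mem_univ, true_and]
    rintro _ ⟨i, rfl⟩ _ ⟨i', rfl⟩
    simp only [gPhi_adj_inl_inl, not_and, not_not]
    rintro rfl
    rfl
  · rintro (⟨i, k⟩ | _ | j) hu
    · simp at hu
    · simp at hu
    · obtain ⟨⟨i, b⟩, hl, hb⟩ := hσ j
      refine ⟨.inl (i, if σ i then 0 else 1), by simp, ?_⟩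
      cases b <;> simp_all

lemma IsBadPair.eq_none_of_gPhi
    (hcl : ∀ (j : Fin m) (i : Fin n), ¬ ((i, true) ∈ Cl j ∧ (i, false) ∈ Cl j))
    {v : Vtx n m} (hb : IsBadPair (GPhi n m Cl) S v) : v = .inr none := by
  rcases v with ⟨i, k⟩ | _ | j
  · exfalso
    by_cases hk : k = 2
    · subst hk
      -- the neighbours of `xᵢ` and `x̄ᵢ` not adjacent to `yᵢ` are clause vertices
      have clause_cover : ∀ b : Bool, ∃ j, .inr (some j) ∈ S ∧ (i, b) ∈ Cl j := by
        intro b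
        obtain ⟨s, hs, hsx⟩ :=
          hb.exists_cover (u := .inl (i, if b then 0 else 1)) (by cases b <;> simp)
        rcases s with ⟨i', k'⟩ | _ | j
        · fin_cases k' <;> cases b <;> simp_all
        · simp_all
        · exact ⟨j, hs, by cases b <;> simp_all⟩
      obtain ⟨j, hj, hj_pos⟩ := clause_cover true
      obtain ⟨j', hj', hj'_neg⟩ := clause_cover false
      by_cases hjj : j = j'
      · exact hcl j i ⟨hj_pos, hjj ▸ hj'_neg⟩
      · exact hb.indep _ hj _ hj' (by simpa using hjj)
    · -- `yᵢ` can only be covered by the other literal vertex of `i`, which is adjacent to `v`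
      obtain ⟨s, -, hs⟩ := hb.exists_cover (u := .inl (i, 2)) (by simpa using hk)
      rcases s with ⟨i', k'⟩ | _ | j
      · fin_cases k <;> fin_cases k' <;> simp_all
      all_goals simp_all
  · rfl
  · exfalso
    obtain ⟨s, -, hs⟩ := hb.exists_cover (u := .inr none) (by simp)
    rcases s with ⟨i', k'⟩ | _ | j'
    all_goals simp_all

lemma IsBadPair.sat_of_gPhi_none (hb : IsBadPair (GPhi n m Cl) S (.inr none)) :
    ∃ σ : Fin n → Bool, ∀ j : Fin m, ∃ l ∈ Cl j, σ l.1 = l.2 := by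
  refine ⟨fun i => decide (.inl (i, 0) ∈ S), fun j => ?_⟩
  obtain ⟨s, hs, hsC, hs_ne, hs_nadj⟩ := hb.exists_cover (u := .inr (some j)) (by simp)
  rcases s with ⟨i, k⟩ | _ | j'
  · rcases gPhi_adj_inl_some.1 hsC with ⟨rfl, hl⟩ | ⟨rfl, hl⟩
    · exact ⟨(i, true), hl, by simpa using hs⟩
    · refine ⟨(i, false), hl, ?_⟩
      simpa using fun hx => hb.indep _ hx _ hs (by simp)
  · simp at hs_ne
  · simp at hs_nadj

end GPhi

/-- A CNF `Φ` (in which no clause contains both a variable and its negation) is not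
satisfiable iff the graph `G_Φ` is a unique key graph. -/
theorem stmt8 (n m : ℕ) (Cl : Fin m → Finset (Fin n × Bool))
    (hcl : ∀ (j : Fin m) (i : Fin n), ¬ ((i, true) ∈ Cl j ∧ (i, false) ∈ Cl j)) :
    ¬ (∃ σ : Fin n → Bool, ∀ j : Fin m, ∃ l ∈ Cl j, σ l.1 = l.2) ↔
      UniqueKeyHypergraph (edgeFam (GPhi n m Cl)) := by
  rw [uniqueKeyHypergraph_edgeFam_iff]
  constructor
  · intro hunsat
    refine ⟨?_, fun S v hb => ?_⟩
    · obtain ⟨j⟩ : Nonempty (Fin m) := by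
        by_contra hm
        exact hunsat ⟨fun _ => true, fun j => (hm ⟨j⟩).elim⟩
      exact ⟨.inr (some j), .inr none, by simp⟩
    · obtain rfl := hb.eq_none_of_gPhi hcl
      exact hunsat hb.sat_of_gPhi_none
  · rintro ⟨-, hnb⟩ ⟨σ, hσ⟩
    exact hnb _ _ (isBadPair_gPhi_of_sat hσ)
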